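/- The delay-sensitive MPI ν_i^* = (c/ρ){n − ρ/(1−ρ) + i·ρ^i/(1−ρ^i)} + rμ with c > 0 and 0 < ρ < 1 is strictly decreasing in the integer i ≥ 1, i.e., shorter nonempty queues receive higher index values. -/

import Mathlib

/-! Multiplying out the denominators and dividing by `ρ ^ i`, the step
`(i + 1) ρ^(i+1) / (1 - ρ^(i+1)) < i ρ^i / (1 - ρ^i)` becomes `(i + 1) ρ < i + ρ^(i+1)`,
which is the strict Bernoulli inequality `1 + (i + 1)(ρ - 1) < ρ^(i+1)`. -/

open Set

theorem add_one_mul_lt_add_pow_succ {ρ : ℝ} (hρ0 : 0 ≤ ρ) (hρ1 : ρ ≠ 1) {i : ℕ} (hi : 1 ≤ i) :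
    ((i : ℝ) + 1) * ρ < i + ρ ^ (i + 1) := by
  have h := one_add_mul_self_lt_rpow_one_add (s := ρ - 1) (p := i + 1) (by linarith)
    (sub_ne_zero.mpr hρ1) (by norm_cast; omega)
  rw [add_sub_cancel, ← Nat.cast_add_one, Real.rpow_natCast] at h
  push_cast at h
  linarith

theorem succ_mul_pow_succ_div_lt {ρ : ℝ} (hρ0 : 0 < ρ) (hρ1 : ρ < 1) {i : ℕ} (hi : 1 ≤ i) :
    ((i : ℝ) + 1) * ρ ^ (i + 1) / (1 - ρ ^ (i + 1)) < i * ρ ^ i / (1 - ρ ^ i) := by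
  have hpos : 0 < ρ ^ i := pow_pos hρ0 i
  rw [div_lt_div_iff₀ (by linarith [pow_lt_one₀ hρ0.le hρ1 (by omega : i + 1 ≠ 0)])
    (by linarith [pow_lt_one₀ hρ0.le hρ1 (by omega : i ≠ 0)])]
  linear_combination ρ ^ i * add_one_mul_lt_add_pow_succ hρ0.le hρ1.ne hi

theorem strictAntiOn_mul_pow_div_one_sub_pow {ρ : ℝ} (hρ0 : 0 < ρ) (hρ1 : ρ < 1) :
    StrictAntiOn (fun i : ℕ ↦ (i : ℝ) * ρ ^ i / (1 - ρ ^ i)) (Ici 1) := by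
  refine strictAntiOn_Ici_of_lt_pred fun m hm ↦ ?_
  obtain ⟨k, rfl⟩ : ∃ k, m = k + 1 := ⟨m - 1, by omega⟩
  simpa using succ_mul_pow_succ_div_lt hρ0 hρ1 (Nat.lt_succ_iff.mp hm)

theorem stmt_12_general (n : ℕ) (c r μ ρ : ℝ)
    (hc : 0 < c) (hρ0 : 0 < ρ) (hρ1 : ρ < 1) :
    ∀ i j : ℕ, 1 ≤ i → i < j → j ≤ n →
      (c / ρ) * ((n : ℝ) - ρ / (1 - ρ) + (j : ℝ) * ρ ^ j / (1 - ρ ^ j)) + r * μ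
        < (c / ρ) * ((n : ℝ) - ρ / (1 - ρ) + (i : ℝ) * ρ ^ i / (1 - ρ ^ i)) + r * μ := by
  intro i j hi hij _
  have h := strictAntiOn_mul_pow_div_one_sub_pow hρ0 hρ1 (mem_Ici.2 hi)
    (mem_Ici.2 (hi.trans hij.le)) hij
  gcongr

/-- The delay-sensitive MPI
`ν_i^* = (c/ρ)[n − ρ/(1−ρ) + i·ρ^i/(1−ρ^i)] + rμ`, with `c > 0` and `0 < ρ < 1`,
is strictly decreasing in the integer `1 ≤ i ≤ n`: shorter nonempty queues receive
higher index values. -/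
theorem stmt_12 (n : ℕ) (hn : 1 ≤ n) (c r μ ρ : ℝ)
    (hc : 0 < c) (hr : 0 ≤ r) (hμ : 0 < μ) (hρ0 : 0 < ρ) (hρ1 : ρ < 1) :
    ∀ i j : ℕ, 1 ≤ i → i < j → j ≤ n →
      (c / ρ) * ((n : ℝ) - ρ / (1 - ρ) + (j : ℝ) * ρ ^ j / (1 - ρ ^ j)) + r * μ
        < (c / ρ) * ((n : ℝ) - ρ / (1 - ρ) + (i : ℝ) * ρ ^ i / (1 - ρ ^ i)) + r * μ :=
  stmt_12_general n c r μ ρ hc hρ0 hρ1
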